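/- arXiv:2305.19568 — 2 statements merged into one kernel-verified Lean document; each statement's English description precedes it below -/
import Mathlib

section
/- For any p ∈ ℝ³ and m ∈ ℝ, the spectral norm (operator norm with respect to the Euclidean norm on ℂ⁴) of the free Dirac Hamiltonian matrix H(p) = p₁·α^1 + p₂·α^2 + p₃·α^3 + m·β equals √(‖p‖² + m²). -/
open Matrix Kronecker

noncomputable section

/-- The Pauli matrices: `pauli 0 = σ¹`, `pauli 1 = σ²`, `pauli 2 = σ³`. -/
def pauli : Fin 3 → Matrix (Fin 2) (Fin 2) ℂ
  | 0 => !![0, 1; 1, 0]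
  | 1 => !![0, -Complex.I; Complex.I, 0]
  | 2 => !![1, 0; 0, -1]

/-- The Dirac matrices `α^i = σ¹ ⊗ σ^i` in the standard representation
(`diracAlpha i` is `α^(i+1)`). -/
def diracAlpha (i : Fin 3) : Matrix (Fin 2 × Fin 2) (Fin 2 × Fin 2) ℂ :=
  pauli 0 ⊗ₖ pauli i

/-- The Dirac matrix `β = σ³ ⊗ I₂` in the standard representation. -/
def diracBeta : Matrix (Fin 2 × Fin 2) (Fin 2 × Fin 2) ℂ :=
  pauli 2 ⊗ₖ (1 : Matrix (Fin 2) (Fin 2) ℂ)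

/-- The free Dirac Hamiltonian matrix `H(p) = p₁ α¹ + p₂ α² + p₃ α³ + m β`. -/
def diracH (p : EuclideanSpace ℝ (Fin 3)) (m : ℝ) :
    Matrix (Fin 2 × Fin 2) (Fin 2 × Fin 2) ℂ :=
  (p 0 : ℂ) • diracAlpha 0 + (p 1 : ℂ) • diracAlpha 1 + (p 2 : ℂ) • diracAlpha 2 +
    (m : ℂ) • diracBeta

/-- `H(p)` is Hermitian. -/
lemma diracH_herm (p : EuclideanSpace ℝ (Fin 3)) (m : ℝ) :
    star (diracH p m) = diracH p m := by
  ext ⟨i, j⟩ ⟨k, l⟩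
  fin_cases i <;> fin_cases j <;> fin_cases k <;> fin_cases l <;>
    simp [diracH, diracAlpha, diracBeta, pauli, Matrix.kroneckerMap_apply,
      Matrix.star_apply, Matrix.one_apply] <;> ring

set_option maxHeartbeats 2000000 in
/-- `H(p)² = (‖p‖² + m²) • 1`. -/
lemma diracH_sq (p : EuclideanSpace ℝ (Fin 3)) (m : ℝ) :
    diracH p m * diracH p m = ((‖p‖ ^ 2 + m ^ 2 : ℝ) : ℂ) • 1 := by
  have hn : ‖p‖ ^ 2 = p 0 ^ 2 + p 1 ^ 2 + p 2 ^ 2 := by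
    rw [EuclideanSpace.norm_eq, Real.sq_sqrt (by positivity)]
    simp [Fin.sum_univ_three, sq_abs, sq]
  ext ⟨i, j⟩ ⟨k, l⟩
  fin_cases i <;> fin_cases j <;> fin_cases k <;> fin_cases l <;>
    simp [diracH, diracAlpha, diracBeta, pauli, Matrix.mul_apply,
      Matrix.kroneckerMap_apply, Matrix.one_apply, Fintype.sum_prod_type,
      Fin.sum_univ_two, hn] <;> push_cast <;> ring_nf <;>
    norm_num [Complex.ext_iff, Prod.ext_iff] <;> constructor <;> ring

set_option maxHeartbeats 1000000 in
set_option synthInstance.maxHeartbeats 400000 in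
/-- The spectral norm (operator norm w.r.t. the Euclidean norm on `ℂ⁴`) of the
free Dirac Hamiltonian `H(p)` equals `√(‖p‖² + m²)`. -/
theorem diracH_spectral_norm (p : EuclideanSpace ℝ (Fin 3)) (m : ℝ) :
    ‖Matrix.toEuclideanCLM (𝕜 := ℂ) (diracH p m)‖ = Real.sqrt (‖p‖ ^ 2 + m ^ 2) := by
  set A := Matrix.toEuclideanCLM (𝕜 := ℂ) (diracH p m) with hA
  have hstar : star A = A := by
    rw [hA, ← map_star, diracH_herm]
  have hsq : A * A = ((‖p‖ ^ 2 + m ^ 2 : ℝ) : ℂ) • 1 := by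
    rw [hA, ← _root_.map_mul, diracH_sq, _root_.map_smul, _root_.map_one]
  have hnorm : ‖A‖ * ‖A‖ = ‖p‖ ^ 2 + m ^ 2 := by
    rw [← CStarRing.norm_star_mul_self (x := A), hstar, hsq]
    rw [← Algebra.algebraMap_eq_smul_one, norm_algebraMap']
    rw [Complex.norm_real, Real.norm_of_nonneg (show (0:ℝ) ≤ ‖p‖ ^ 2 + m ^ 2 by positivity)]
  rw [show Real.sqrt (‖p‖ ^ 2 + m ^ 2) = Real.sqrt (‖A‖ * ‖A‖) by rw [hnorm],
    Real.sqrt_mul_self (norm_nonneg _)]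

end
end

section
/- For each i ∈ {1,2,3}, any n ≥ 1, and any n×n complex matrix M, the matrix exponential satisfies (Π^i ⊗ I_n) · exp(β ⊗ M) · (Π^i ⊗ I_n) = exp(α^i ⊗ M), where ⊗ denotes the Kronecker product. This reduces implementing the kinetic and vector-potential exponentials in the α^i basis to implementing them in the diagonal β basis. -/
open Matrix Kronecker

noncomputable section

/-- `Π^i = (1/√2)(β + α^i)`. -/
def Pi (i : Fin 3) : Matrix (Fin 2 × Fin 2) (Fin 2 × Fin 2) ℂ :=
  ((1 / Real.sqrt 2 : ℝ) : ℂ) • (diracBeta + diracAlpha i)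

/-!
`β` and `α^i` are anticommuting involutions, so `Π^i = (β + α^i)/√2` is again an involution and
`Π^i β Π^i = α^i`. Hence `Π^i ⊗ I_n` is an involution conjugating `β ⊗ M` into `α^i ⊗ M`, and
conjugation commutes with the exponential.
-/

section Anticommuting

variable {𝕜 R : Type*} [CommRing 𝕜] [Ring R] [Algebra 𝕜 R] {a b : R} {c : 𝕜}

theorem add_mul_self_of_anticommute (ha : a * a = 1) (hb : b * b = 1)
    (hba : b * a = -(a * b)) : (b + a) * (b + a) = (2 : 𝕜) • 1 := by
  rw [add_mul, mul_add, mul_add, ha, hb, hba, two_smul]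
  abel

theorem add_mul_mul_add_of_anticommute (ha : a * a = 1) (hb : b * b = 1)
    (hba : b * a = -(a * b)) : (b + a) * b * (b + a) = (2 : 𝕜) • a := by
  have hab : a * b * a = -b := by
    rw [mul_assoc, hba, mul_neg, ← mul_assoc, ha, one_mul]
  rw [add_mul, hb, one_add_mul, mul_add, mul_assoc a b b, hb, mul_one, hab, two_smul]
  abel

theorem smul_add_mul_self_of_anticommute (hc : 2 * c ^ 2 = 1) (ha : a * a = 1)
    (hb : b * b = 1) (hba : b * a = -(a * b)) : c • (b + a) * (c • (b + a)) = 1 := by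
  rw [smul_mul_smul_comm, add_mul_self_of_anticommute (𝕜 := 𝕜) ha hb hba, smul_smul,
    mul_comm, ← pow_two, hc, one_smul]

theorem smul_add_mul_mul_smul_add_of_anticommute (hc : 2 * c ^ 2 = 1) (ha : a * a = 1)
    (hb : b * b = 1) (hba : b * a = -(a * b)) : c • (b + a) * b * (c • (b + a)) = a := by
  rw [smul_mul_assoc, smul_mul_smul_comm, add_mul_mul_add_of_anticommute (𝕜 := 𝕜) ha hb hba,
    smul_smul, mul_comm, ← pow_two, hc, one_smul]

end Anticommuting

theorem Matrix.exp_conj_of_mul_self_eq_one {m 𝔸 : Type*} [Fintype m] [DecidableEq m]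
    [NormedRing 𝔸] [NormedAlgebra ℚ 𝔸] [CompleteSpace 𝔸] {P : Matrix m m 𝔸} (hP : P * P = 1)
    (A : Matrix m m 𝔸) : P * NormedSpace.exp A * P = NormedSpace.exp (P * A * P) :=
  (exp_units_conj ⟨P, P, hP, hP⟩ A).symm

theorem Matrix.kronecker_one_mul_kronecker_mul_kronecker_one {α l m m' l' n n' : Type*}
    [CommSemiring α] [Fintype m] [Fintype m'] [Fintype n] [Fintype n'] [DecidableEq n]
    [DecidableEq n'] (P : Matrix l m α) (A : Matrix m m' α) (Q : Matrix m' l' α)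
    (M : Matrix n n' α) :
    (P ⊗ₖ (1 : Matrix n n α)) * (A ⊗ₖ M) * (Q ⊗ₖ (1 : Matrix n' n' α)) = (P * A * Q) ⊗ₖ M := by
  rw [← mul_kronecker_mul, ← mul_kronecker_mul, Matrix.one_mul, Matrix.mul_one]

theorem pauli_mul_self (i : Fin 3) : pauli i * pauli i = 1 := by
  fin_cases i <;> ext j k <;> fin_cases j <;> fin_cases k <;> simp [pauli]

theorem pauli_two_mul_pauli_zero : pauli 2 * pauli 0 = -(pauli 0 * pauli 2) := by
  ext j k; fin_cases j <;> fin_cases k <;> simp [pauli]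

theorem diracBeta_mul_self : diracBeta * diracBeta = 1 := by
  rw [diracBeta, ← mul_kronecker_mul, pauli_mul_self, one_mul, one_kronecker_one]

theorem diracAlpha_mul_self (i : Fin 3) : diracAlpha i * diracAlpha i = 1 := by
  rw [diracAlpha, ← mul_kronecker_mul, pauli_mul_self, pauli_mul_self, one_kronecker_one]

theorem diracBeta_mul_diracAlpha (i : Fin 3) :
    diracBeta * diracAlpha i = -(diracAlpha i * diracBeta) := by
  rw [diracBeta, diracAlpha, ← mul_kronecker_mul, ← mul_kronecker_mul, one_mul, mul_one,
    pauli_two_mul_pauli_zero, ← neg_one_smul ℂ, smul_kronecker, neg_one_smul]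

theorem two_mul_inv_sqrt_two_sq : 2 * ((1 / Real.sqrt 2 : ℝ) : ℂ) ^ 2 = 1 := by
  rw [← Complex.ofReal_pow, div_pow, Real.sq_sqrt zero_le_two]
  norm_num

theorem Pi_mul_self (i : Fin 3) : Pi i * Pi i = 1 :=
  smul_add_mul_self_of_anticommute two_mul_inv_sqrt_two_sq (diracAlpha_mul_self i)
    diracBeta_mul_self (diracBeta_mul_diracAlpha i)

theorem Pi_mul_diracBeta_mul_Pi (i : Fin 3) : Pi i * diracBeta * Pi i = diracAlpha i :=
  smul_add_mul_mul_smul_add_of_anticommute two_mul_inv_sqrt_two_sq (diracAlpha_mul_self i)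
    diracBeta_mul_self (diracBeta_mul_diracAlpha i)

theorem Pi_conj_exp_kronecker_general (i : Fin 3) (n : ℕ)
    (M : Matrix (Fin n) (Fin n) ℂ) :
    (Pi i ⊗ₖ (1 : Matrix (Fin n) (Fin n) ℂ)) * NormedSpace.exp (diracBeta ⊗ₖ M) *
      (Pi i ⊗ₖ (1 : Matrix (Fin n) (Fin n) ℂ)) =
    NormedSpace.exp (diracAlpha i ⊗ₖ M) := by
  have hP : (Pi i ⊗ₖ (1 : Matrix (Fin n) (Fin n) ℂ)) * (Pi i ⊗ₖ 1) = 1 := by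
    rw [← mul_kronecker_mul, Pi_mul_self, one_mul, one_kronecker_one]
  rw [exp_conj_of_mul_self_eq_one hP, kronecker_one_mul_kronecker_mul_kronecker_one,
    Pi_mul_diracBeta_mul_Pi]

/-- Conjugating `exp(β ⊗ M)` by `Π^i ⊗ I_n` yields `exp(α^i ⊗ M)`: this reduces
implementing exponentials in the `α^i` basis to the diagonal `β` basis. -/
theorem Pi_conj_exp_kronecker (i : Fin 3) (n : ℕ) (hn : 1 ≤ n)
    (M : Matrix (Fin n) (Fin n) ℂ) :
    (Pi i ⊗ₖ (1 : Matrix (Fin n) (Fin n) ℂ)) * NormedSpace.exp (diracBeta ⊗ₖ M) *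
      (Pi i ⊗ₖ (1 : Matrix (Fin n) (Fin n) ℂ)) =
    NormedSpace.exp (diracAlpha i ⊗ₖ M) :=
  Pi_conj_exp_kronecker_general i n M

end
end
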